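/- arXiv:math/0508337 — 3 statements merged into one kernel-verified Lean document; each statement's English description precedes it below -/
import Mathlib

section
/- For any real number x and any n ≥ 1, ∑_{k=1}^n B_{n,k}(1,1,...,1) evaluated via the weighted sum ∑_{k=1}^n ∑_λ (k!/(λ_1!···λ_n!)) x^k over partition-type vectors λ of n with k parts equals x(1+x)^{n-1}. -/
/-! `k!/(λ_1!⋯λ_n!)` counts the compositions of `n` into `k` positive parts of which `λ_i` are
equal to `i`, so the inner sum is the number `C(n-1, k-1)` of all such compositions and the
identity becomes the binomial theorem. This count is read off as the coefficient of `X^n` in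
`(X + X^2 + ⋯ + X^n)^k`: the multinomial theorem expands it into the inner sum, while up to degree
`n` this power agrees with `X^k/(1-X)^k`, whose coefficient is `C(n-1, k-1)`. -/

open Finset

/-- Partition-type vectors `λ ∈ ℕ^n` with `∑ i·λ_i = n` and `∑ λ_i = k`. -/
def bellIndex (n k : ℕ) : Finset (Fin n → Fin (n + 1)) :=
  univ.filter fun l => (∑ i, (i.1 + 1) * (l i).1 = n) ∧ (∑ i, (l i).1 = k)

/-- The coefficient `n! / (λ_1!⋯λ_n! (1!)^{λ_1}⋯(n!)^{λ_n})`. -/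
def bellCoeff (n : ℕ) (l : Fin n → Fin (n + 1)) : ℚ :=
  (n.factorial : ℚ) /
    ((∏ i, ((l i).1.factorial * ((i.1 + 1).factorial) ^ (l i).1) : ℕ) : ℚ)

namespace PowerSeries

theorem coeff_sum_X_pow_pow {R ι : Type*} [CommSemiring R] [DecidableEq ι] (s : Finset ι)
    (e : ι → ℕ) (k n : ℕ) :
    coeff n ((∑ i ∈ s, (X : R⟦X⟧) ^ e i) ^ k)
      = ∑ g ∈ s.piAntidiag k with ∑ i ∈ s, e i * g i = n, (Nat.multinomial s g : R) := by
  simp_rw [sum_pow_eq_sum_piAntidiag, ← pow_mul, prod_pow_eq_pow_sum, map_sum,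
    ← map_natCast (C (R := R)), coeff_C_mul_X_pow, sum_filter, eq_comm]

theorem X_pow_dvd_geom_sum_pow_sub_invOneSubPow {R : Type*} [CommRing R] (m d : ℕ) :
    (X : R⟦X⟧) ^ m ∣ (∑ i ∈ range m, X ^ i) ^ d - (invOneSubPow R d).val := by
  have hinv : (1 - X : R⟦X⟧) ^ d * (invOneSubPow R d).val = 1 := by
    rw [← invOneSubPow_inv_eq_one_sub_pow]; exact (invOneSubPow R d).inv_val
  have hgeom : (∑ i ∈ range m, X ^ i) * (1 - X) = (1 - X ^ m : R⟦X⟧) := by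
    rw [← neg_sub, mul_neg, geom_sum_mul, neg_sub]
  have hsub : (∑ i ∈ range m, X ^ i) ^ d - (invOneSubPow R d).val
      = ((1 - X ^ m) ^ d - 1 ^ d) * (invOneSubPow R d).val := by
    rw [← hgeom, mul_pow, one_pow]
    linear_combination -(∑ i ∈ range m, (X : R⟦X⟧) ^ i) ^ d * hinv
  rw [hsub]
  refine Dvd.dvd.mul_right (dvd_trans ?_ (sub_dvd_pow_sub_pow _ _ d)) _
  simp

theorem coeff_geom_sum_pow_succ {R : Type*} [CommRing R] {m n : ℕ} (hn : n < m) (d : ℕ) :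
    coeff n ((∑ i ∈ range m, (X : R⟦X⟧) ^ i) ^ (d + 1)) = (d + n).choose d := by
  have h := X_pow_dvd_iff.1 (X_pow_dvd_geom_sum_pow_sub_invOneSubPow (R := R) m (d + 1)) n hn
  rwa [map_sub, invOneSubPow_val_succ_eq_mk_add_choose, coeff_mk, sub_eq_zero] at h

end PowerSeries

theorem sum_Icc_choose_mul_pow {R : Type*} [CommSemiring R] (x : R) (m : ℕ) :
    ∑ k ∈ Icc 1 (m + 1), (m.choose (k - 1) : R) * x ^ k = x * (1 + x) ^ m := by
  rw [← Ico_add_one_right_eq_Icc, sum_Ico_eq_sum_range, add_comm (1 : R) x, add_pow, mul_sum]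
  refine sum_congr (by simp) fun k _ => ?_
  simp only [add_tsub_cancel_left, one_pow]
  ring

theorem Nat.cast_multinomial {K ι : Type*} [DivisionSemiring K] [CharZero K] (s : Finset ι)
    (f : ι → ℕ) :
    (Nat.multinomial s f : K)
      = ((∑ i ∈ s, f i).factorial : K) / ((∏ i ∈ s, (f i).factorial : ℕ) : K) :=
  Nat.cast_div (Nat.prod_factorial_dvd_factorial_sum s f) (Nat.cast_ne_zero.2 (by positivity))

theorem le_of_sum_succ_mul_eq {n : ℕ} {g : Fin n → ℕ} (hg : ∑ i, (i.1 + 1) * g i = n)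
    (i : Fin n) : g i ≤ n :=
  hg ▸ (Nat.le_mul_of_pos_left _ i.1.succ_pos).trans
    (single_le_sum (f := fun j : Fin n => (j.1 + 1) * g j) (fun _ _ => Nat.zero_le _) (mem_univ i))

theorem sum_bellIndex_eq_sum_piAntidiag {M : Type*} [AddCommMonoid M] (n k : ℕ)
    (f : (Fin n → ℕ) → M) :
    ∑ l ∈ bellIndex n k, f (fun i => (l i).1)
      = ∑ g ∈ univ.piAntidiag k with ∑ i, (i.1 + 1) * g i = n, f g := by
  refine sum_bij (fun l _ i => (l i).1) ?_ ?_ ?_ fun _ _ => rfl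
  · intro l hl
    simp only [bellIndex, mem_filter, mem_univ, true_and] at hl
    simp [hl]
  · intro l _ l' _ h
    funext i
    exact Fin.ext (congrFun h i)
  · intro g hg
    simp only [mem_filter, mem_piAntidiag] at hg
    refine ⟨fun i => ⟨g i, Nat.lt_succ_of_le (le_of_sum_succ_mul_eq hg.2 i)⟩, ?_, rfl⟩
    simp [bellIndex, hg]

open PowerSeries in
theorem sum_multinomial_bellIndex {n k : ℕ} (hk : 0 < k) (hkn : k ≤ n) :
    ∑ l ∈ bellIndex n k, Nat.multinomial univ (fun i => (l i).1) = (n - 1).choose (k - 1) := by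
  obtain ⟨d, rfl⟩ : ∃ d, k = d + 1 := ⟨k - 1, by omega⟩
  obtain ⟨j, rfl⟩ : ∃ j, n = j + (d + 1) := ⟨n - (d + 1), by omega⟩
  have hseries : ∑ i : Fin (j + (d + 1)), (X : ℤ⟦X⟧) ^ (i.1 + 1)
      = X * ∑ i ∈ range (j + (d + 1)), X ^ i := by
    rw [Fin.sum_univ_eq_sum_range (fun i => (X : ℤ⟦X⟧) ^ (i + 1)), mul_sum]
    simp only [pow_succ']
  apply Nat.cast_injective (R := ℤ)
  rw [Nat.cast_sum, sum_bellIndex_eq_sum_piAntidiag _ _ fun g => (Nat.multinomial univ g : ℤ),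
    ← coeff_sum_X_pow_pow, hseries, mul_pow, coeff_X_pow_mul, coeff_geom_sum_pow_succ (by omega),
    add_comm d j, Nat.add_succ_sub_one, Nat.add_sub_cancel]

/-- `∑_{k=1}^n ∑_λ k!/(λ_1!⋯λ_n!) x^k = x(1+x)^{n-1}`, the sum over
partition-type vectors λ of n with k parts. -/
theorem sum_partition_weighted (x : ℝ) (n : ℕ) (hn : 1 ≤ n) :
    ∑ k ∈ Icc 1 n, ∑ l ∈ bellIndex n k,
        ((k.factorial : ℝ) / ((∏ i, ((l i).1.factorial) : ℕ) : ℝ)) * x ^ k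
      = x * (1 + x) ^ (n - 1) := by
  obtain ⟨m, rfl⟩ : ∃ m, n = m + 1 := ⟨n - 1, by omega⟩
  rw [Nat.add_sub_cancel, ← sum_Icc_choose_mul_pow]
  refine sum_congr rfl fun k hk => ?_
  obtain ⟨hk, hkn⟩ := mem_Icc.1 hk
  rw [← sum_mul]
  congr 1
  calc _ = ((∑ l ∈ bellIndex (m + 1) k, Nat.multinomial univ (fun i => (l i).1) : ℕ) : ℝ)
      := by
        rw [Nat.cast_sum]
        exact sum_congr rfl fun l hl => by rw [Nat.cast_multinomial, (mem_filter.1 hl).2.2]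
    _ = m.choose (k - 1) := by rw [sum_multinomial_bellIndex hk hkn, Nat.add_sub_cancel]
end

section
/- Suppose g is smooth on an interval with |g^{(m)}(t)| ≤ A·m!/B^m for all m ≥ 1, and f is smooth with |f^{(k)}(g(t))| ≤ C·k!/D^k for all k ≥ 1, where A,B,C,D > 0. Then the composition h = f ∘ g satisfies |h^{(n)}(t)| ≤ E·n!/F^n for all n ≥ 1, where E = AC/(A+D) and F = BD/(A+D). In particular, the composition of real-analytic functions is real-analytic. -/
open Set

lemma iteratedDerivWithin_inv_linear (cc r : ℝ) (s : Set ℝ) (hs : IsOpen s)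
    (hsr : ∀ x ∈ s, x < r) :
    ∀ m : ℕ, Set.EqOn (iteratedDerivWithin m (fun y => cc * (r - y)⁻¹) s)
      (fun x => cc * m.factorial * ((r - x)⁻¹) ^ (m + 1)) s := by
  intro m
  induction m with
  | zero => intro x hx; simp [pow_one]
  | succ m IH =>
    intro x hx
    have hu : UniqueDiffWithinAt ℝ s x := hs.uniqueDiffWithinAt hx
    rw [iteratedDerivWithin_succ]
    have h1 : derivWithin (iteratedDerivWithin m (fun y => cc * (r - y)⁻¹) s) s x =
        derivWithin (fun x => cc * m.factorial * ((r - x)⁻¹) ^ (m + 1)) s x :=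
      derivWithin_congr IH (IH hx)
    rw [h1]
    have hne : r - x ≠ 0 := sub_ne_zero.2 (hsr x hx).ne'
    have hd : HasDerivAt (fun y : ℝ => (r - y)⁻¹) (1 / (r - x) ^ 2) x := by
      have := ((hasDerivAt_id x).const_sub r).inv hne
      exact this.congr_deriv (by simp)
    have hd2 : HasDerivAt (fun x => cc * m.factorial * ((r - x)⁻¹) ^ (m + 1))
        (cc * m.factorial * ((m + 1 : ℕ) * ((r - x)⁻¹) ^ m * (1 / (r - x) ^ 2))) x :=
      (hd.pow (m + 1)).const_mul _
    rw [(hd2.hasDerivWithinAt).derivWithin hu]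
    have : ((m + 1 : ℕ).factorial : ℝ) = (m.factorial : ℝ) * (m + 1) := by
      rw [Nat.factorial_succ]; push_cast; ring
    rw [this]
    simp only [one_div, ← inv_pow]
    push_cast
    ring

lemma faa_di_bruno_scalar (φ ψ : ℝ → ℝ) (s u : Set ℝ) (hs : IsOpen s) (hu : IsOpen u)
    (hψ : ContDiffOn ℝ (⊤ : ℕ∞) ψ s) (hφ : ContDiffOn ℝ (⊤ : ℕ∞) φ u) (hmap : Set.MapsTo ψ s u)
    (x : ℝ) (hx : x ∈ s) (n : ℕ) :
    iteratedDerivWithin n (φ ∘ ψ) s x = ∑ c : OrderedFinpartition n,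
      iteratedDerivWithin c.length φ u (ψ x) *
        ∏ i, iteratedDerivWithin (c.partSize i) ψ s x := by
  have hq := hφ.ftaylorSeriesWithin hu.uniqueDiffOn
  have hp := hψ.ftaylorSeriesWithin hs.uniqueDiffOn
  have hcomp := hq.comp hp hmap
  have key := hcomp.eq_iteratedFDerivWithin_of_uniqueDiffOn (m := n) (by exact_mod_cast le_top)
    hs.uniqueDiffOn hx
  rw [iteratedDerivWithin_eq_iteratedFDerivWithin, ← key]
  rw [FormalMultilinearSeries.taylorComp]
  rw [ContinuousMultilinearMap.sum_apply]
  congr 1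
  ext c
  rw [FormalMultilinearSeries.compAlongOrderedFinpartition_apply]
  have happ : (c.applyOrderedFinpartition
      (fun i => ftaylorSeriesWithin ℝ ψ s x (c.partSize i)) (fun _ => 1)) =
      fun i => iteratedDerivWithin (c.partSize i) ψ s x := by
    ext i
    rw [OrderedFinpartition.applyOrderedFinpartition_apply]
    exact iteratedDerivWithin_eq_iteratedFDerivWithin.symm
  rw [happ]
  have := iteratedFDerivWithin_apply_eq_iteratedDerivWithin_mul_prod
    (𝕜 := ℝ) (f := φ) (s := u) (x := ψ x) (n := c.length)
    (m := fun i => iteratedDerivWithin (c.partSize i) ψ s x)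
  rw [show (ftaylorSeriesWithin ℝ φ u (ψ x) c.length) =
    iteratedFDerivWithin ℝ c.length φ u (ψ x) from rfl, this]
  simp [smul_eq_mul, mul_comm]

/-- if `g` is smooth with `|g^{(m)}(t)| ≤ A·m!/B^m` for `m ≥ 1` and
`f` is smooth with `|f^{(k)}(g(t))| ≤ C·k!/D^k` for `k ≥ 1` (`A,B,C,D > 0`), then
`h = f ∘ g` satisfies `|h^{(n)}(t)| ≤ E·n!/F^n` for all `n ≥ 1`, where
`E = AC/(A+D)` and `F = BD/(A+D)`. -/
theorem composition_deriv_bound (f g : ℝ → ℝ)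
    (hf : ContDiff ℝ (⊤ : ℕ∞) f) (hg : ContDiff ℝ (⊤ : ℕ∞) g)
    (A B C D : ℝ) (hA : 0 < A) (hB : 0 < B) (hC : 0 < C) (hD : 0 < D) (t : ℝ)
    (hgb : ∀ m : ℕ, 1 ≤ m → |iteratedDeriv m g t| ≤ A * (m.factorial : ℝ) / B ^ m)
    (hfb : ∀ k : ℕ, 1 ≤ k → |iteratedDeriv k f (g t)| ≤ C * (k.factorial : ℝ) / D ^ k) :
    ∀ n : ℕ, 1 ≤ n →
      |iteratedDeriv n (f ∘ g) t| ≤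
        (A * C / (A + D)) * (n.factorial : ℝ) / (B * D / (A + D)) ^ n := by
  intro n hn
  have hAD : (0 : ℝ) < A + D := by linarith
  set Fr : ℝ := B * D / (A + D) with hFrdef
  set E' : ℝ := A * C / (A + D) with hE'def
  have hFr : 0 < Fr := div_pos (mul_pos hB hD) hAD
  have hFrB : Fr < B := by
    rw [hFrdef, div_lt_iff₀ hAD]; nlinarith
  -- majorant functions
  set G : ℝ → ℝ := fun z => -A + A * B * (B - z)⁻¹ with hGdef
  set F0 : ℝ → ℝ := fun y => -C + C * D * (D - y)⁻¹ with hF0def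
  have hBne : ∀ x ∈ Iio Fr, B - x ≠ 0 := by
    intro x hx; have : x < B := lt_trans hx hFrB; exact sub_ne_zero.2 this.ne'
  have hGsmooth : ContDiffOn ℝ (⊤ : ℕ∞) G (Iio Fr) := by
    apply ContDiffOn.add contDiffOn_const
    exact ContDiffOn.mul contDiffOn_const
      ((contDiffOn_const.sub contDiffOn_id).inv hBne)
  have hF0smooth : ContDiffOn ℝ (⊤ : ℕ∞) F0 (Iio D) := by
    apply ContDiffOn.add contDiffOn_const
    apply ContDiffOn.mul contDiffOn_const
    apply (contDiffOn_const.sub contDiffOn_id).inv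
    intro y hy; exact sub_ne_zero.2 (ne_of_gt hy)
  have hmapG : Set.MapsTo G (Iio Fr) (Iio D) := by
    intro x hx
    simp only [mem_Iio] at hx ⊢
    have hBx : 0 < B - x := by have : x < B := lt_trans hx hFrB; linarith
    have h2 : x * (A + D) < B * D := by
      rw [hFrdef] at hx; exact (lt_div_iff₀ hAD).mp hx
    have h3 : A * B / (B - x) < A + D := (div_lt_iff₀ hBx).2 (by nlinarith)
    rw [hGdef]
    simp only
    rw [show A * B * (B - x)⁻¹ = A * B / (B - x) from (div_eq_mul_inv _ _).symm]
    linarith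
  have hG0 : G 0 = 0 := by
    rw [hGdef]; simp only [sub_zero]
    field_simp
    ring
  have h0mem : (0 : ℝ) ∈ Iio Fr := hFr
  have h0D : (0 : ℝ) ∈ Iio D := hD
  have hud : UniqueDiffOn ℝ (Iio Fr) := isOpen_Iio.uniqueDiffOn
  have hudD : UniqueDiffOn ℝ (Iio D) := isOpen_Iio.uniqueDiffOn
  -- derivative values of G at 0
  have hGder : ∀ m : ℕ, 1 ≤ m →
      iteratedDerivWithin m G (Iio Fr) 0 = A * (m.factorial : ℝ) / B ^ m := by
    intro m hm
    rw [hGdef]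
    rw [iteratedDerivWithin_const_add (by omega) (-A)]
    rw [iteratedDerivWithin_inv_linear (A * B) B (Iio Fr) isOpen_Iio
      (fun x hx => lt_trans hx hFrB) m h0mem]
    simp only [sub_zero]
    rw [pow_succ]
    simp only [inv_pow]
    field_simp
  have hF0der : ∀ k : ℕ, 1 ≤ k →
      iteratedDerivWithin k F0 (Iio D) 0 = C * (k.factorial : ℝ) / D ^ k := by
    intro k hk
    rw [hF0def]
    rw [iteratedDerivWithin_const_add (by omega) (-C)]
    rw [iteratedDerivWithin_inv_linear (C * D) D (Iio D) isOpen_Iio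
      (fun x hx => hx) k h0D]
    simp only [sub_zero]
    rw [pow_succ]
    simp only [inv_pow]
    field_simp
  -- closed form of the composition of the majorants
  have hcompEq : Set.EqOn (F0 ∘ G)
      (fun x => (C * D / (A + D) - C) + E' * Fr * (Fr - x)⁻¹) (Iio Fr) := by
    intro x hx
    simp only [mem_Iio] at hx
    have hBx : 0 < B - x := by have : x < B := lt_trans hx hFrB; linarith
    have hFx : 0 < Fr - x := by linarith
    simp only [Function.comp_apply, hGdef, hF0def]
    have key : D - (-A + A * B * (B - x)⁻¹) = (A + D) * (Fr - x) / (B - x) := by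
      rw [hFrdef]
      field_simp
      ring
    rw [key]
    rw [hFrdef, hE'def]
    have h3 : (A + D) * (B * D / (A + D) - x) = D * B - (A + D) * x := by
      field_simp
    rw [inv_div, h3]
    rw [show (B * D / (A + D) - x) = (D * B - (A + D) * x) / (A + D) by field_simp]
    rw [inv_div]
    have h2 : 0 < D * B - (A + D) * x := by
      rw [hFrdef] at hFx
      have := (lt_div_iff₀ hAD).mp (by linarith : x < B * D / (A + D))
      nlinarith
    have h2' : -(A * x) + D * B - D * x ≠ 0 := ne_of_gt (by linarith)
    field_simp
    linear_combination D * mul_inv_cancel₀ h2'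
  -- value of the n-th derivative of the majorant composition
  have hHder : iteratedDerivWithin n (F0 ∘ G) (Iio Fr) 0
      = E' * (n.factorial : ℝ) / Fr ^ n := by
    rw [iteratedDerivWithin_congr hcompEq h0mem]
    rw [iteratedDerivWithin_const_add (by omega) _]
    rw [iteratedDerivWithin_inv_linear (E' * Fr) Fr (Iio Fr) isOpen_Iio
      (fun x hx => hx) n h0mem]
    simp only [sub_zero]
    have hE'pos : 0 < E' := div_pos (mul_pos hA hC) hAD
    rw [pow_succ]
    simp only [inv_pow]
    field_simp
  -- Faà di Bruno for the majorants
  have Hmaj := faa_di_bruno_scalar F0 G (Iio Fr) (Iio D) isOpen_Iio isOpen_Iio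
    hGsmooth hF0smooth hmapG 0 h0mem n
  rw [hHder, hG0] at Hmaj
  -- Faà di Bruno for f ∘ g
  have Hfg := faa_di_bruno_scalar f g univ univ isOpen_univ isOpen_univ
    hg.contDiffOn hf.contDiffOn (mapsTo_univ _ _) t (mem_univ t) n
  simp only [iteratedDerivWithin_univ] at Hfg
  -- termwise bound
  have hsum : ∑ c : OrderedFinpartition n,
      iteratedDerivWithin c.length F0 (Iio D) 0 *
        ∏ i, iteratedDerivWithin (c.partSize i) G (Iio Fr) 0
      = ∑ c : OrderedFinpartition n,
      (C * ((c.length).factorial : ℝ) / D ^ c.length) *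
        ∏ i, (A * (((c.partSize i)).factorial : ℝ) / B ^ (c.partSize i)) := by
    apply Finset.sum_congr rfl
    intro c _
    have hlen : 1 ≤ c.length := c.length_pos (by omega)
    rw [hF0der _ hlen]
    congr 1
    apply Finset.prod_congr rfl
    intro i _
    have := c.neZero_partSize i
    exact hGder _ (Nat.one_le_iff_ne_zero.2 this.out)
  rw [Hfg]
  calc |∑ c : OrderedFinpartition n, iteratedDeriv c.length f (g t) *
          ∏ i, iteratedDeriv (c.partSize i) g t|
      ≤ ∑ c : OrderedFinpartition n, |iteratedDeriv c.length f (g t) *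
          ∏ i, iteratedDeriv (c.partSize i) g t| := Finset.abs_sum_le_sum_abs _ _
    _ ≤ ∑ c : OrderedFinpartition n,
        (C * ((c.length).factorial : ℝ) / D ^ c.length) *
          ∏ i, (A * (((c.partSize i)).factorial : ℝ) / B ^ (c.partSize i)) := by
        apply Finset.sum_le_sum
        intro c _
        rw [abs_mul, Finset.abs_prod]
        have hlen : 1 ≤ c.length := c.length_pos (by omega)
        refine mul_le_mul (hfb _ hlen) (Finset.prod_le_prod
          (fun i _ => abs_nonneg _) (fun i _ => ?_))
          (Finset.prod_nonneg fun i _ => abs_nonneg _) (by positivity)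
        have := c.neZero_partSize i
        exact hgb _ (Nat.one_le_iff_ne_zero.2 this.out)
    _ = E' * (n.factorial : ℝ) / Fr ^ n := by rw [← hsum, ← Hmaj]
end

section
/- The Faà di Bruno formula: if f and g are n-times differentiable real functions with g mapping into the domain of f, then (f ∘ g)^{(n)}(t) = ∑_{k=1}^n ∑_λ (n!/(λ_1!···λ_n!)) f^{(k)}(g(t)) ∏_{j=1}^n (g^{(j)}(t)/j!)^{λ_j}, summed over λ ∈ ℕ^n with ∑_j jλ_j = n and ∑_j λ_j = k. -/
open Finset

open OrderedFinpartition


variable {n : ℕ}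

/-- number of parts of size `j` -/
def ofpType (c : OrderedFinpartition n) (j : ℕ) : ℕ :=
  (univ.filter fun i => c.partSize i = j).card

lemma ofpType_eq_sum (c : OrderedFinpartition n) (j : ℕ) :
    ofpType c j = ∑ i : Fin c.length, if c.partSize i = j then 1 else 0 :=
  Finset.card_filter _ _

lemma ofpType_zero (c : OrderedFinpartition n) : ofpType c 0 = 0 := by
  rw [ofpType, Finset.card_eq_zero, Finset.filter_eq_empty_iff]
  exact fun i _ => (c.partSize_pos i).ne'

lemma ofpType_of_gt (c : OrderedFinpartition n) {j : ℕ} (hj : n < j) : ofpType c j = 0 := by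
  rw [ofpType, Finset.card_eq_zero, Finset.filter_eq_empty_iff]
  exact fun i _ h => absurd (h ▸ c.partSize_le i) (by omega)

lemma ofpType_mem (c : OrderedFinpartition n) {j : ℕ} (h : ofpType c j ≠ 0) : j ∈ Icc 1 n := by
  by_contra hj
  simp only [mem_Icc, not_and_or, not_le] at hj
  rcases hj with hj | hj
  · interval_cases j
    exact h (ofpType_zero c)
  · exact h (ofpType_of_gt c hj)

lemma partSize_mem (c : OrderedFinpartition n) (i : Fin c.length) : c.partSize i ∈ Icc 1 n :=
  mem_Icc.mpr ⟨c.partSize_pos i, c.partSize_le i⟩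

lemma sum_ofpType (c : OrderedFinpartition n) : ∑ j ∈ Icc 1 n, ofpType c j = c.length := by
  have := Finset.card_eq_sum_card_fiberwise (f := c.partSize) (s := univ) (t := Icc 1 n)
    (fun i _ => partSize_mem c i)
  rw [Finset.card_univ, Fintype.card_fin] at this
  rw [this]
  rfl

lemma sum_partSize (c : OrderedFinpartition n) : ∑ i, c.partSize i = n := by
  have := Fintype.card_congr c.equivSigma
  simpa [Fintype.card_sigma] using this

lemma sum_mul_ofpType (c : OrderedFinpartition n) : ∑ j ∈ Icc 1 n, j * ofpType c j = n := by
  conv_rhs => rw [← sum_partSize c,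
    ← Finset.sum_fiberwise_of_maps_to (fun i _ => partSize_mem c i) c.partSize]
  refine Finset.sum_congr rfl fun j _ => ?_
  symm
  rw [ofpType, Finset.sum_congr rfl (fun i hi => (Finset.mem_filter.mp hi).2), Finset.sum_const,
    smul_eq_mul, mul_comm]

lemma prod_ofpType {M : Type*} [CommMonoid M] (c : OrderedFinpartition n) (b : ℕ → M) :
    ∏ i, b (c.partSize i) = ∏ j ∈ Icc 1 n, b j ^ ofpType c j := by
  rw [← Finset.prod_fiberwise_of_maps_to (fun i _ => partSize_mem c i) (fun i => b (c.partSize i))]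
  refine Finset.prod_congr rfl fun j _ => ?_
  rw [ofpType, Finset.prod_congr rfl (fun i hi => by rw [(Finset.mem_filter.mp hi).2]),
    Finset.prod_const]

lemma ofpType_extendLeft (c : OrderedFinpartition n) (j : ℕ) :
    ofpType c.extendLeft j = (if j = 1 then 1 else 0) + ofpType c j := by
  rw [ofpType_eq_sum, ofpType_eq_sum]
  show (∑ i : Fin (c.length + 1), if (Fin.cons 1 c.partSize : Fin (c.length+1) → ℕ) i = j then 1 else 0) = _
  rw [Fin.sum_univ_succ]
  simp only [Fin.cons_zero, Fin.cons_succ]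
  congr 1
  simp [eq_comm]

lemma ofpType_extendMiddle (c : OrderedFinpartition n) (i : Fin c.length) (j : ℕ) :
    ofpType (c.extendMiddle i) j + (if c.partSize i = j then 1 else 0) =
      ofpType c j + (if c.partSize i + 1 = j then 1 else 0) := by
  rw [ofpType_eq_sum, ofpType_eq_sum]
  show (∑ m : Fin c.length,
      if Function.update c.partSize i (c.partSize i + 1) m = j then 1 else 0) + _ = _
  rw [← Finset.add_sum_erase univ _ (Finset.mem_univ i),
    ← Finset.add_sum_erase univ (fun m => if c.partSize m = j then 1 else 0) (Finset.mem_univ i)]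
  have : ∀ m ∈ univ.erase i,
      (if Function.update c.partSize i (c.partSize i + 1) m = j then 1 else 0) =
      (if c.partSize m = j then 1 else 0) := by
    intro m hm
    rw [Function.update_of_ne (Finset.mem_erase.mp hm).1]
  rw [Finset.sum_congr rfl this, Function.update_self]
  ring

lemma sum_comp_partSize (c : OrderedFinpartition n) (h : ℕ → ℕ) :
    ∑ i, h (c.partSize i) = ∑ s ∈ Icc 1 n, ofpType c s * h s := by
  rw [← Finset.sum_fiberwise_of_maps_to (fun i _ => partSize_mem c i) (fun i => h (c.partSize i))]
  refine Finset.sum_congr rfl fun s _ => ?_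
  rw [Finset.sum_congr rfl (fun i hi => by rw [(Finset.mem_filter.mp hi).2]), Finset.sum_const,
    ofpType, smul_eq_mul]

open Classical in
/-- partitions of `n` with part-size counts given by `l` -/
noncomputable def ofpFiber (n : ℕ) (l : ℕ → ℕ) : Finset (OrderedFinpartition n) :=
  univ.filter fun c => ∀ j, ofpType c j = l j

lemma ofpType_le (c : OrderedFinpartition n) (j : ℕ) : ofpType c j ≤ c.length := by
  rw [ofpType]
  exact (Finset.card_filter_le _ _).trans (by simp)

/-- the `l`-vector obtained by removing a singleton part -/
def subOne (l : ℕ → ℕ) : ℕ → ℕ := fun j => if j = 1 then l 1 - 1 else l j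

/-- the `l`-vector obtained by shrinking a part of size `s+1` to size `s` -/
def shrink (l : ℕ → ℕ) (s : ℕ) : ℕ → ℕ :=
  fun j => if j = s then l s + 1 else if j = s + 1 then l (s + 1) - 1 else l j

lemma extendLeft_mem_iff (c : OrderedFinpartition n) (l : ℕ → ℕ) :
    (∀ j, ofpType c.extendLeft j = l j) ↔ (1 ≤ l 1 ∧ ∀ j, ofpType c j = subOne l j) := by
  have key := ofpType_extendLeft c
  constructor
  · intro h
    have h1 := key 1
    rw [h 1] at h1
    refine ⟨by split_ifs at h1 <;> subst_vars <;> omega, fun j => ?_⟩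
    have hj := key j
    rw [h j] at hj
    unfold subOne
    split_ifs at hj ⊢ <;> subst_vars <;> omega
  · rintro ⟨h1, h⟩ j
    have hj := h j
    unfold subOne at hj
    rw [key j]
    split_ifs at hj ⊢ <;> subst_vars <;> omega

lemma extendMiddle_mem_iff (c : OrderedFinpartition n) (i : Fin c.length) (l : ℕ → ℕ) :
    (∀ j, ofpType (c.extendMiddle i) j = l j) ↔
      (1 ≤ l (c.partSize i + 1) ∧ ∀ j, ofpType c j = shrink l (c.partSize i) j) := by
  set s := c.partSize i with hs
  have key : ∀ j, ofpType (c.extendMiddle i) j + (if s = j then 1 else 0) =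
      ofpType c j + (if s + 1 = j then 1 else 0) := fun j => ofpType_extendMiddle c i j
  constructor
  · intro h
    have h1 := key (s + 1)
    rw [h (s + 1)] at h1
    refine ⟨by split_ifs at h1 <;> subst_vars <;> omega, fun j => ?_⟩
    have hj := key j
    rw [h j] at hj
    unfold shrink
    split_ifs at hj ⊢ <;> subst_vars <;> omega
  · rintro ⟨h1, h⟩ j
    have hj := key j
    rw [h j] at hj
    unfold shrink at hj
    split_ifs at hj ⊢ <;> subst_vars <;> omega

open Classical in
lemma ofpFiber_card_succ (n : ℕ) (l : ℕ → ℕ) :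
    (ofpFiber (n+1) l).card =
      (if 1 ≤ l 1 then (ofpFiber n (subOne l)).card else 0) +
      ∑ s ∈ Icc 1 n, (if 1 ≤ l (s+1) then (l s + 1) * (ofpFiber n (shrink l s)).card else 0) := by
  have h0 : (ofpFiber (n+1) l).card =
      ∑ c : OrderedFinpartition (n+1), if (∀ j, ofpType c j = l j) then 1 else 0 := by
    rw [ofpFiber, Finset.card_filter]
  rw [h0, ← Equiv.sum_comp (extendEquiv n)
    (fun c => if (∀ j, ofpType c j = l j) then 1 else 0)]
  rw [← Finset.univ_sigma_univ, Finset.sum_sigma]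
  have hterm : ∀ c : OrderedFinpartition n,
      (∑ o : Option (Fin c.length),
        if (∀ j, ofpType (extendEquiv n ⟨c, o⟩) j = l j) then 1 else 0) =
      (if (1 ≤ l 1 ∧ ∀ j, ofpType c j = subOne l j) then 1 else 0) +
      ∑ i : Fin c.length,
        (if (1 ≤ l (c.partSize i + 1) ∧ ∀ j, ofpType c j = shrink l (c.partSize i) j)
          then 1 else 0) := by
    intro c
    rw [Fintype.sum_option]
    congr 1
    · show (if (∀ j, ofpType c.extendLeft j = l j) then 1 else 0) = _
      rw [if_congr (extendLeft_mem_iff c l) rfl rfl]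
    · refine Finset.sum_congr rfl fun i _ => ?_
      show (if (∀ j, ofpType (c.extendMiddle i) j = l j) then 1 else 0) = _
      rw [if_congr (extendMiddle_mem_iff c i l) rfl rfl]
  rw [Finset.sum_congr rfl (fun c _ => hterm c), Finset.sum_add_distrib]
  congr 1
  · rw [← Finset.card_filter]
    by_cases h1 : 1 ≤ l 1
    · rw [if_pos h1, ofpFiber]
      congr 1
      apply Finset.filter_congr
      intro c _
      simp [h1]
    · rw [if_neg h1, Finset.card_eq_zero, Finset.filter_eq_empty_iff]
      intro c _
      tauto
  · have hsw : ∀ c : OrderedFinpartition n,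
        (∑ i : Fin c.length,
          if (1 ≤ l (c.partSize i + 1) ∧ ∀ j, ofpType c j = shrink l (c.partSize i) j)
            then 1 else 0) =
        ∑ s ∈ Icc 1 n, ofpType c s *
          (if (1 ≤ l (s + 1) ∧ ∀ j, ofpType c j = shrink l s j) then 1 else 0) := by
      intro c
      exact sum_comp_partSize c
        (fun s => if (1 ≤ l (s + 1) ∧ ∀ j, ofpType c j = shrink l s j) then 1 else 0)
    rw [Finset.sum_congr rfl (fun c _ => hsw c), Finset.sum_comm]
    refine Finset.sum_congr rfl fun s _ => ?_
    have hpt : ∀ c : OrderedFinpartition n,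
        ofpType c s * (if (1 ≤ l (s + 1) ∧ ∀ j, ofpType c j = shrink l s j) then 1 else 0) =
        (l s + 1) * (if (1 ≤ l (s + 1) ∧ ∀ j, ofpType c j = shrink l s j) then 1 else 0) := by
      intro c
      by_cases h : (1 ≤ l (s + 1) ∧ ∀ j, ofpType c j = shrink l s j)
      · rw [if_pos h]
        have := h.2 s
        rw [this]
        simp [shrink]
      · rw [if_neg h, mul_zero, mul_zero]
    rw [Finset.sum_congr rfl (fun c _ => hpt c), ← Finset.mul_sum]
    by_cases h1 : 1 ≤ l (s + 1)
    · rw [if_pos h1]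
      congr 1
      rw [ofpFiber, Finset.card_filter]
      refine Finset.sum_congr rfl fun c _ => ?_
      simp [h1]
    · rw [if_neg h1]
      have : ∀ c : OrderedFinpartition n,
          (if (1 ≤ l (s + 1) ∧ ∀ j, ofpType c j = shrink l s j) then 1 else 0) = 0 := by
        intro c; rw [if_neg]; tauto
      rw [Finset.sum_congr rfl (fun c _ => this c), Finset.sum_const, smul_zero, mul_zero]

/-- The factorial denominator for a type vector. -/
noncomputable def Dfac (n : ℕ) (l : ℕ → ℕ) : ℝ :=
  ∏ j ∈ Icc 1 n, (((l j).factorial : ℝ) * ((j.factorial : ℝ)) ^ (l j))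

lemma Dfac_succ_of_top_zero (n : ℕ) (l : ℕ → ℕ) (h : l (n+1) = 0) :
    Dfac (n+1) l = Dfac n l := by
  rw [Dfac, Finset.prod_Icc_succ_top (by omega), h]
  simp [Dfac]

theorem ofpFiber_card_mul :
    ∀ (n : ℕ) (l : ℕ → ℕ), (∀ j, l j ≠ 0 → j ∈ Icc 1 n) → (∑ j ∈ Icc 1 n, j * l j = n) →
    ((ofpFiber n l).card : ℝ) * Dfac n l = n.factorial := by
  intro n
  classical
  induction n with
  | zero =>
    intro l hsupp _
    have hl : ∀ j, l j = 0 := by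
      intro j
      by_contra h
      have := hsupp j h
      simp at this
    have h1 : ofpFiber 0 l = univ := by
      rw [ofpFiber, Finset.filter_true_of_mem]
      intro c _ j
      have h2 := ofpType_le c j
      have h3 := c.length_le
      rw [hl j]
      omega
    rw [h1, Finset.card_univ]
    have : Fintype.card (OrderedFinpartition 0) = 1 := Fintype.card_unique
    rw [this]
    simp [Dfac]
  | succ n IH =>
    intro l hsupp hsum
    have pair : ∀ a b, a ∈ Icc 1 (n+1) → b ∈ Icc 1 (n+1) → a ≠ b →
        a * l a + b * l b ≤ n + 1 := by
      intro a b ha hb hab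
      rw [← hsum, ← Finset.add_sum_erase _ _ ha]
      have : b * l b ≤ ∑ x ∈ (Icc 1 (n+1)).erase a, x * l x :=
        Finset.single_le_sum (f := fun x => x * l x) (fun _ _ => Nat.zero_le _)
          (Finset.mem_erase.mpr ⟨Ne.symm hab, hb⟩)
      omega
    have single : ∀ a, a ∈ Icc 1 (n+1) → a * l a ≤ n + 1 := by
      intro a ha
      rw [← hsum]
      exact Finset.single_le_sum (f := fun x => x * l x) (fun _ _ => Nat.zero_le _) ha
    -- term 1 : the extendLeft contribution
    have term1 : ((if 1 ≤ l 1 then (ofpFiber n (subOne l)).card else 0 : ℕ) : ℝ) *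
        Dfac (n+1) l = (l 1) * n.factorial := by
      by_cases h1 : 1 ≤ l 1
      · rw [if_pos h1]
        have hmem1 : (1 : ℕ) ∈ Icc 1 (n+1) := by simp
        -- subOne l vanishes at n+1
        have htop : subOne l (n+1) = 0 := by
          unfold subOne
          split_ifs with h
          · -- n + 1 = 1, so n = 0 and l 1 = 1 from the sum
            have hn : n = 0 := by omega
            subst hn
            rw [Finset.Icc_self, Finset.sum_singleton] at hsum
            omega
          · -- n ≥ 1 : if l (n+1) ≠ 0 we contradict the pair bound
            by_contra hc
            have := pair 1 (n+1) hmem1 (by simp) (by omega)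
            have h2 : 1 * l 1 + (n+1) * l (n+1) ≥ 1 + (n+1) := by
              have : l (n+1) ≥ 1 := by omega
              nlinarith
            omega
        -- support of subOne l
        have hsupp' : ∀ j, subOne l j ≠ 0 → j ∈ Icc 1 n := by
          intro j hj
          have hj2 : l j ≠ 0 := by
            unfold subOne at hj
            by_cases hj1 : j = 1
            · subst hj1; rw [if_pos rfl] at hj; omega
            · rwa [if_neg hj1] at hj
          have hj3 := hsupp j hj2
          simp only [mem_Icc] at hj3 ⊢
          refine ⟨hj3.1, ?_⟩
          rcases Nat.lt_or_ge j (n+1) with h | h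
          · omega
          · exfalso
            have : j = n + 1 := by omega
            rw [this] at hj
            exact hj htop
        -- sum of subOne l
        have hsum' : ∑ j ∈ Icc 1 n, j * subOne l j = n := by
          have hext : ∑ j ∈ Icc 1 n, j * subOne l j = ∑ j ∈ Icc 1 (n+1), j * subOne l j := by
            rw [Finset.sum_Icc_succ_top (by omega : 1 ≤ n + 1), htop, Nat.mul_zero, Nat.add_zero]
          rw [hext]
          rw [← Finset.add_sum_erase _ _ hmem1] at hsum ⊢
          have hoff : ∑ x ∈ (Icc 1 (n+1)).erase 1, x * subOne l x =
              ∑ x ∈ (Icc 1 (n+1)).erase 1, x * l x := by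
            refine Finset.sum_congr rfl fun x hx => ?_
            have := (Finset.mem_erase.mp hx).1
            unfold subOne
            rw [if_neg this]
          rw [hoff]
          unfold subOne
          rw [if_pos rfl]
          omega
        -- Dfac relation
        have hD : Dfac (n+1) l = (l 1) * Dfac n (subOne l) := by
          rw [← Dfac_succ_of_top_zero n (subOne l) htop]
          rw [Dfac, Dfac, ← Finset.mul_prod_erase _ _ hmem1, ← Finset.mul_prod_erase _ _ hmem1]
          have hoff : ∏ x ∈ (Icc 1 (n+1)).erase 1,
              (((subOne l x).factorial : ℝ) * ((x.factorial : ℝ)) ^ (subOne l x)) =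
              ∏ x ∈ (Icc 1 (n+1)).erase 1,
              (((l x).factorial : ℝ) * ((x.factorial : ℝ)) ^ (l x)) := by
            refine Finset.prod_congr rfl fun x hx => ?_
            have := (Finset.mem_erase.mp hx).1
            unfold subOne
            rw [if_neg this]
          rw [hoff]
          have h11 : subOne l 1 = l 1 - 1 := by unfold subOne; rw [if_pos rfl]
          rw [h11]
          have hc2 : ((l 1 : ℕ) : ℝ) = ((l 1 - 1 : ℕ) : ℝ) + 1 := by
            rw [← Nat.cast_add_one]
            congr 1
            omega
          have hfac : ((l 1).factorial : ℝ) = (l 1) * ((l 1 - 1).factorial : ℝ) := by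
            conv_lhs => rw [show l 1 = (l 1 - 1) + 1 by omega]
            rw [Nat.factorial_succ, hc2]
            push_cast
            ring
          rw [hfac]
          simp only [Nat.factorial_one, Nat.cast_one, one_pow, mul_one]
          have hc : ((l 1 : ℕ) : ℝ) = ((l 1 - 1 : ℕ) : ℝ) + 1 := by
            rw [← Nat.cast_add_one]
            congr 1
            omega
          rw [hc]
          ring
        rw [hD, ← mul_assoc, mul_comm ((ofpFiber n (subOne l)).card : ℝ) ((l 1 : ℕ) : ℝ),
          mul_assoc, IH (subOne l) hsupp' hsum']
      · rw [if_neg h1]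
        have : l 1 = 0 := by omega
        rw [this]
        simp
    -- contribution of each shrink term
    have terms : ∀ s ∈ Icc 1 n,
        ((if 1 ≤ l (s+1) then (l s + 1) * (ofpFiber n (shrink l s)).card else 0 : ℕ) : ℝ) *
        Dfac (n+1) l = ((s+1 : ℕ) : ℝ) * (l (s+1)) * n.factorial := by
      intro s hs
      simp only [mem_Icc] at hs
      by_cases h1 : 1 ≤ l (s+1)
      swap
      · rw [if_neg h1]
        have h0 : l (s+1) = 0 := by omega
        rw [h0]
        simp
      rw [if_pos h1]
      obtain ⟨m, hm⟩ : ∃ m, l (s+1) = m + 1 := ⟨l (s+1) - 1, by omega⟩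
      have hLs : shrink l s s = l s + 1 := by unfold shrink; rw [if_pos rfl]
      have hLs1 : shrink l s (s+1) = m := by
        unfold shrink
        rw [if_neg (by omega), if_pos rfl]
        omega
      have hLoff : ∀ j, j ≠ s → j ≠ s+1 → shrink l s j = l j := by
        intro j hj1 hj2
        unfold shrink
        rw [if_neg hj1, if_neg hj2]
      have hmem_s : s ∈ Icc 1 (n+1) := by simp only [mem_Icc]; omega
      have hmem_s1 : s + 1 ∈ (Icc 1 (n+1)).erase s := by
        simp only [Finset.mem_erase, mem_Icc]
        omega
      have htopL : shrink l s (n+1) = 0 := by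
        rcases eq_or_ne s n with rfl | hsn
        · rw [hLs1]
          have h2 := single (s+1) (by simp only [mem_Icc]; omega)
          rw [hm] at h2
          obtain ⟨B, hB⟩ : ∃ B, (s+1) * m = B := ⟨_, rfl⟩
          have e2 : (s+1) * (m+1) = B + (s+1) := by rw [← hB]; ring
          rw [e2] at h2
          have hB0 : B = 0 := by omega
          rw [hB0] at hB
          rcases Nat.mul_eq_zero.mp hB with h | h
          · omega
          · exact h
        · rw [hLoff (n+1) (by omega) (by omega)]
          by_contra hc
          have hp := pair (s+1) (n+1) (by simp only [mem_Icc]; omega)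
            (by simp only [mem_Icc]; omega) (by omega)
          have h2 : s+1 ≤ (s+1) * l (s+1) := Nat.le_mul_of_pos_right _ (by omega)
          have h3 : n+1 ≤ (n+1) * l (n+1) := Nat.le_mul_of_pos_right _ (by omega)
          omega
      have hsuppL : ∀ j, shrink l s j ≠ 0 → j ∈ Icc 1 n := by
        intro j hj
        by_cases hj1 : j = s
        · subst hj1
          simp only [mem_Icc]
          omega
        by_cases hj2 : j = s + 1
        · subst hj2
          rcases eq_or_ne s n with rfl | hsn
          · exact absurd htopL hj
          · simp only [mem_Icc]
            omega
        · have hjn : j ≠ n + 1 := by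
            intro he
            rw [he] at hj
            exact hj htopL
          rw [hLoff j hj1 hj2] at hj
          have := hsupp j hj
          simp only [mem_Icc] at this ⊢
          omega
      have hsumL : ∑ j ∈ Icc 1 n, j * shrink l s j = n := by
        have hext : ∑ j ∈ Icc 1 n, j * shrink l s j = ∑ j ∈ Icc 1 (n+1), j * shrink l s j := by
          rw [Finset.sum_Icc_succ_top (by omega : 1 ≤ n + 1), htopL, Nat.mul_zero, Nat.add_zero]
        have hoff : ∑ x ∈ ((Icc 1 (n+1)).erase s).erase (s+1), x * shrink l s x =
            ∑ x ∈ ((Icc 1 (n+1)).erase s).erase (s+1), x * l x := by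
          refine Finset.sum_congr rfl fun x hx => ?_
          have hx1 := (Finset.mem_erase.mp hx).1
          have hx2 := (Finset.mem_erase.mp (Finset.mem_erase.mp hx).2).1
          rw [hLoff x hx2 hx1]
        rw [hext, ← Finset.add_sum_erase _ _ hmem_s, ← Finset.add_sum_erase _ _ hmem_s1,
          hoff, hLs, hLs1]
        have hsum2 := hsum
        rw [← Finset.add_sum_erase _ _ hmem_s, ← Finset.add_sum_erase _ _ hmem_s1, hm] at hsum2
        obtain ⟨A, hA⟩ : ∃ A, s * l s = A := ⟨_, rfl⟩
        obtain ⟨B, hB⟩ : ∃ B, (s+1) * m = B := ⟨_, rfl⟩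
        have e1 : s * (l s + 1) = A + s := by rw [← hA]; ring
        have e2 : (s+1) * (m+1) = B + (s+1) := by rw [← hB]; ring
        rw [hA, e2] at hsum2
        rw [e1, hB]
        omega
      -- the Dfac relation
      have hfrel : Dfac (n+1) l * (((l s + 1 : ℕ) : ℝ) * (s.factorial : ℝ)) =
          Dfac (n+1) (shrink l s) * (((m + 1 : ℕ) : ℝ) * ((s+1).factorial : ℝ)) := by
        rw [Dfac, Dfac, ← Finset.mul_prod_erase _ _ hmem_s, ← Finset.mul_prod_erase _ _ hmem_s1,
          ← Finset.mul_prod_erase _ _ hmem_s, ← Finset.mul_prod_erase _ _ hmem_s1]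
        have hoff : ∏ x ∈ ((Icc 1 (n+1)).erase s).erase (s+1),
            (((shrink l s x).factorial : ℝ) * ((x.factorial : ℝ)) ^ (shrink l s x)) =
            ∏ x ∈ ((Icc 1 (n+1)).erase s).erase (s+1),
            (((l x).factorial : ℝ) * ((x.factorial : ℝ)) ^ (l x)) := by
          refine Finset.prod_congr rfl fun x hx => ?_
          have hx1 := (Finset.mem_erase.mp hx).1
          have hx2 := (Finset.mem_erase.mp (Finset.mem_erase.mp hx).2).1
          rw [hLoff x hx2 hx1]
        rw [hoff, hLs, hLs1, hm]
        have f1 : ((l s + 1).factorial : ℝ) = ((l s + 1 : ℕ) : ℝ) * ((l s).factorial : ℝ) := by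
          rw [Nat.factorial_succ]
          push_cast
          ring
        have f2 : ((m + 1).factorial : ℝ) = ((m + 1 : ℕ) : ℝ) * (m.factorial : ℝ) := by
          rw [Nat.factorial_succ]
          push_cast
          ring
        have f3 : ((s.factorial : ℝ)) ^ (l s + 1) = (s.factorial : ℝ) * (s.factorial : ℝ) ^ (l s) :=
          pow_succ' _ _
        have f4 : (((s+1).factorial : ℝ)) ^ (m + 1) =
            ((s+1).factorial : ℝ) * (((s+1).factorial : ℝ)) ^ m := pow_succ' _ _
        rw [f1, f2, f3, f4]
        push_cast
        ring
      have hDL : Dfac (n+1) (shrink l s) = Dfac n (shrink l s) :=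
        Dfac_succ_of_top_zero n _ htopL
      have hIH := IH (shrink l s) hsuppL hsumL
      -- now conclude by cancelling s.factorial
      have hsf : ((s.factorial : ℝ)) ≠ 0 := Nat.cast_ne_zero.mpr (Nat.factorial_ne_zero s)
      apply mul_right_cancel₀ hsf
      calc (((l s + 1) * (ofpFiber n (shrink l s)).card : ℕ) : ℝ) * Dfac (n+1) l *
            (s.factorial : ℝ)
          = ((ofpFiber n (shrink l s)).card) *
              (Dfac (n+1) l * (((l s + 1 : ℕ) : ℝ) * (s.factorial : ℝ))) := by push_cast; ring
        _ = ((ofpFiber n (shrink l s)).card) *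
              (Dfac n (shrink l s) * (((m + 1 : ℕ) : ℝ) * ((s+1).factorial : ℝ))) := by
            rw [hfrel, hDL]
        _ = (n.factorial : ℝ) * (((m + 1 : ℕ) : ℝ) * ((s+1).factorial : ℝ)) := by
            rw [← mul_assoc, hIH]
        _ = ((s+1 : ℕ) : ℝ) * (l (s+1)) * (n.factorial : ℝ) * (s.factorial : ℝ) := by
            rw [hm, Nat.factorial_succ]
            push_cast
            ring
    -- assemble everything
    rw [ofpFiber_card_succ, Nat.cast_add, Nat.cast_sum, add_mul, Finset.sum_mul, term1,
      Finset.sum_congr rfl terms]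
    have hkey : l 1 + ∑ s ∈ Icc 1 n, (s+1) * l (s+1) = n + 1 := by
      have h2 : ∑ s ∈ Icc 1 n, (s+1) * l (s+1) = ∑ j ∈ Icc 2 (n+1), j * l j := by
        rw [show (2 : ℕ) = 1 + 1 from rfl, show n + 1 = n + 1 from rfl,
          ← Finset.map_add_right_Icc 1 n 1]
        rw [Finset.sum_map]
        rfl
      have h3 : (Icc 1 (n+1)).erase 1 = Icc 2 (n+1) := by
        rw [Finset.Icc_erase_left]
        exact (Finset.Icc_add_one_left_eq_Ioc 1 (n+1)).symm
      have h4 : 1 * l 1 + ∑ x ∈ (Icc 1 (n+1)).erase 1, x * l x = n + 1 := by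
        rw [Finset.add_sum_erase _ (fun j => j * l j) (show (1:ℕ) ∈ Icc 1 (n+1) by simp)]
        exact hsum
      rw [h2, ← h3]
      omega
    rw [← Finset.sum_mul]
    have : (l 1 : ℝ) * n.factorial + (∑ s ∈ Icc 1 n, ((s+1:ℕ):ℝ) * (l (s+1))) * n.factorial =
        ((l 1 + ∑ s ∈ Icc 1 n, (s+1) * l (s+1) : ℕ) : ℝ) * n.factorial := by
      push_cast
      ring
    rw [this, hkey, Nat.factorial_succ]
    push_cast
    ring

lemma sum_Icc_one {M : Type*} [AddCommMonoid M] (n : ℕ) (G : ℕ → M) :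
    ∑ j ∈ Icc 1 n, G j = ∑ i : Fin n, G (i.1 + 1) := by
  rw [Fin.sum_univ_eq_sum_range (fun i => G (i + 1)) n, ← Finset.Ico_add_one_right_eq_Icc,
    Finset.sum_Ico_eq_sum_range]
  simp [add_comm]

lemma prod_Icc_one {M : Type*} [CommMonoid M] (n : ℕ) (G : ℕ → M) :
    ∏ j ∈ Icc 1 n, G j = ∏ i : Fin n, G (i.1 + 1) := by
  rw [Fin.prod_univ_eq_prod_range (fun i => G (i + 1)) n, ← Finset.Ico_add_one_right_eq_Icc,
    Finset.prod_Ico_eq_prod_range]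
  simp [add_comm]

/-- extend a `Fin`-indexed type vector to a `ℕ`-indexed one -/
def toL (n : ℕ) (l : Fin n → Fin (n + 1)) : ℕ → ℕ :=
  fun j => if h : 1 ≤ j ∧ j ≤ n then (l ⟨j - 1, by omega⟩).1 else 0

lemma toL_apply (n : ℕ) (l : Fin n → Fin (n + 1)) (i : Fin n) :
    toL n l (i.1 + 1) = (l i).1 := by
  unfold toL
  rw [dif_pos ⟨by omega, by omega⟩]
  exact congrArg (fun x => (l x).1) (Fin.ext (by simp))

lemma toL_supp (n : ℕ) (l : Fin n → Fin (n + 1)) :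
    ∀ j, toL n l j ≠ 0 → j ∈ Icc 1 n := by
  intro j hj
  unfold toL at hj
  by_cases h : 1 ≤ j ∧ j ≤ n
  · simp only [mem_Icc]; omega
  · rw [dif_neg h] at hj; omega

/-- the type vector of an ordered finpartition, as a `Fin`-indexed vector -/
def typeVec (n : ℕ) (c : OrderedFinpartition n) : Fin n → Fin (n + 1) :=
  fun i => ⟨ofpType c (i.1 + 1),
    lt_of_le_of_lt (le_trans (ofpType_le c _) c.length_le) (Nat.lt_succ_self n)⟩

lemma typeVec_eq_iff (n : ℕ) (c : OrderedFinpartition n) (l : Fin n → Fin (n + 1)) :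
    typeVec n c = l ↔ (∀ j, ofpType c j = toL n l j) := by
  constructor
  · intro h j
    by_cases hj : 1 ≤ j ∧ j ≤ n
    · have hj1 : j - 1 < n := by omega
      have h2 := congrArg Fin.val (congrFun h ⟨j - 1, hj1⟩)
      have h3 : toL n l (j - 1 + 1) = (l ⟨j - 1, hj1⟩).1 := toL_apply n l ⟨j - 1, hj1⟩
      have h4 : j = (j - 1) + 1 := by omega
      rw [h4, h3, ← h2]
      rfl
    · unfold toL
      rw [dif_neg hj]
      rcases Nat.lt_or_ge j 1 with h1 | h1
      · interval_cases j
        exact ofpType_zero c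
      · exact ofpType_of_gt c (by omega)
  · intro h
    funext i
    apply Fin.ext
    show ofpType c (i.1 + 1) = (l i).1
    rw [h (i.1 + 1), toL_apply]

theorem stepA' (n : ℕ) (f g : ℝ → ℝ)
    (hf : ContDiff ℝ n f) (hg : ContDiff ℝ n g) (t : ℝ) :
    iteratedDeriv n (f ∘ g) t =
      ∑ c : OrderedFinpartition n,
        iteratedDeriv c.length f (g t) * ∏ i, iteratedDeriv (c.partSize i) g t := by
  have hQ : HasFTaylorSeriesUpToOn n f (ftaylorSeries ℝ f) Set.univ :=
    (hasFTaylorSeriesUpToOn_univ_iff.mpr (contDiff_iff_ftaylorSeries.mp hf))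
  have hP : HasFTaylorSeriesUpToOn n g (ftaylorSeries ℝ g) Set.univ :=
    (hasFTaylorSeriesUpToOn_univ_iff.mpr (contDiff_iff_ftaylorSeries.mp hg))
  have hcomp := hQ.comp hP (Set.mapsTo_univ _ _)
  have h2 := hcomp.eq_iteratedFDerivWithin_of_uniqueDiffOn le_rfl uniqueDiffOn_univ
    (Set.mem_univ t)
  rw [iteratedDeriv, ← iteratedFDerivWithin_univ, ← h2]
  simp only [FormalMultilinearSeries.taylorComp, ContinuousMultilinearMap.sum_apply]
  congr 1
  ext c
  rw [FormalMultilinearSeries.compAlongOrderedFinpartition_apply]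
  have : (c.applyOrderedFinpartition
      (fun m ↦ ftaylorSeries ℝ g t (c.partSize m)) (fun _ ↦ (1:ℝ)))
      = fun m ↦ (iteratedDeriv (c.partSize m) g t) • (1:ℝ) := by
    ext m
    simp only [OrderedFinpartition.applyOrderedFinpartition_apply, ftaylorSeries, iteratedDeriv,
      smul_eq_mul, mul_one]
    rfl
  rw [this, ContinuousMultilinearMap.map_smul_univ]
  simp only [ftaylorSeries, iteratedDeriv, smul_eq_mul, mul_one]
  rw [mul_comm]

/-- Faà di Bruno formula: if `f` and `g` are `n`-times continuously
differentiable, then `(f ∘ g)^{(n)}(t) = ∑_{k=1}^n ∑_λ n!/(λ_1!⋯λ_n!)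
f^{(k)}(g(t)) ∏_j (g^{(j)}(t)/j!)^{λ_j}`, summed over partition-type vectors λ. -/
theorem faa_di_bruno (n : ℕ) (hn : 1 ≤ n) (f g : ℝ → ℝ)
    (hf : ContDiff ℝ n f) (hg : ContDiff ℝ n g) (t : ℝ) :
    iteratedDeriv n (f ∘ g) t =
      ∑ k ∈ Icc 1 n, ∑ l ∈ bellIndex n k,
        ((n.factorial : ℝ) / ((∏ i, ((l i).1.factorial) : ℕ) : ℝ)) *
          iteratedDeriv k f (g t) *
          ∏ j : Fin n, (iteratedDeriv (j.1 + 1) g t / ((j.1 + 1).factorial : ℝ)) ^ (l j).1 := by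
  classical
  rw [stepA' n f g hf hg t]
  set B : Finset (Fin n → Fin (n+1)) :=
    univ.filter (fun l => ∑ i, (i.1+1) * (l i).1 = n) with hBdef
  -- LHS: fiberwise decomposition over the type vector
  have hmaps : ∀ c : OrderedFinpartition n, typeVec n c ∈ B := by
    intro c
    rw [hBdef, Finset.mem_filter]
    refine ⟨Finset.mem_univ _, ?_⟩
    have h := sum_mul_ofpType c
    rw [sum_Icc_one n (fun j => j * ofpType c j)] at h
    exact h
  have key1 : (∑ c : OrderedFinpartition n,
        iteratedDeriv c.length f (g t) * ∏ i, iteratedDeriv (c.partSize i) g t)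
      = ∑ l ∈ B, ((univ.filter (fun c : OrderedFinpartition n => typeVec n c = l)).card : ℝ) *
          (iteratedDeriv (∑ i, (l i).1) f (g t) *
            ∏ i : Fin n, iteratedDeriv (i.1+1) g t ^ (l i).1) := by
    rw [← Finset.sum_fiberwise_of_maps_to (fun c _ => hmaps c)
      (fun c => iteratedDeriv c.length f (g t) * ∏ i, iteratedDeriv (c.partSize i) g t)]
    refine Finset.sum_congr rfl fun l _ => ?_
    have hc : ∀ c ∈ univ.filter (fun c : OrderedFinpartition n => typeVec n c = l),
        iteratedDeriv c.length f (g t) * ∏ i, iteratedDeriv (c.partSize i) g t =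
        iteratedDeriv (∑ i, (l i).1) f (g t) *
          ∏ i : Fin n, iteratedDeriv (i.1+1) g t ^ (l i).1 := by
      intro c hcmem
      have htype := (typeVec_eq_iff n c l).mp (Finset.mem_filter.mp hcmem).2
      congr 1
      · congr 1
        rw [← sum_ofpType c, sum_Icc_one n (fun j => ofpType c j)]
        refine Finset.sum_congr rfl fun i _ => ?_
        rw [htype (i.1+1), toL_apply]
      · rw [prod_ofpType c (fun j => iteratedDeriv j g t),
          prod_Icc_one n (fun j => iteratedDeriv j g t ^ ofpType c j)]
        refine Finset.prod_congr rfl fun i _ => ?_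
        rw [htype (i.1+1), toL_apply]
    rw [Finset.sum_congr rfl hc, Finset.sum_const, nsmul_eq_mul]
  rw [key1]
  -- RHS: collapse the double sum over k
  have hbell : ∀ k, bellIndex n k = B.filter (fun l => ∑ i, (l i).1 = k) := by
    intro k
    rw [hBdef, Finset.filter_filter]
    rfl
  have hBmem : ∀ l ∈ B, (∑ i, (l i).1) ∈ Icc 1 n := by
    intro l hl
    have hP := (Finset.mem_filter.mp hl).2
    simp only [mem_Icc]
    constructor
    · by_contra h
      have h0 : ∑ i, (l i).1 = 0 := by omega
      have : ∀ i ∈ univ, (l i).1 = 0 := fun i hi =>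
        Finset.sum_eq_zero_iff.mp h0 i hi
      rw [Finset.sum_congr rfl (fun i hi => by rw [this i hi, Nat.mul_zero])] at hP
      simp at hP
      omega
    · calc ∑ i, (l i).1 ≤ ∑ i : Fin n, (i.1+1) * (l i).1 :=
            Finset.sum_le_sum (fun i _ => Nat.le_mul_of_pos_left _ (Nat.succ_pos _))
        _ = n := hP
  have key2 : (∑ k ∈ Icc 1 n, ∑ l ∈ bellIndex n k,
        ((n.factorial : ℝ) / ((∏ i, ((l i).1.factorial) : ℕ) : ℝ)) *
          iteratedDeriv k f (g t) *
          ∏ j : Fin n, (iteratedDeriv (j.1 + 1) g t / ((j.1 + 1).factorial : ℝ)) ^ (l j).1)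
      = ∑ l ∈ B,
        ((n.factorial : ℝ) / ((∏ i, ((l i).1.factorial) : ℕ) : ℝ)) *
          iteratedDeriv (∑ i, (l i).1) f (g t) *
          ∏ j : Fin n, (iteratedDeriv (j.1 + 1) g t / ((j.1 + 1).factorial : ℝ)) ^ (l j).1 := by
    rw [← Finset.sum_fiberwise_of_maps_to hBmem]
    refine Finset.sum_congr rfl fun k _ => ?_
    rw [hbell k]
    refine Finset.sum_congr rfl fun l hl => ?_
    rw [(Finset.mem_filter.mp hl).2]
  rw [key2]
  -- pointwise equality on B
  refine Finset.sum_congr rfl fun l hl => ?_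
  -- the counting result
  have hsumL : ∑ j ∈ Icc 1 n, j * toL n l j = n := by
    rw [sum_Icc_one n (fun j => j * toL n l j)]
    have hP := (Finset.mem_filter.mp hl).2
    calc ∑ i : Fin n, (i.1+1) * toL n l (i.1+1)
        = ∑ i : Fin n, (i.1+1) * (l i).1 :=
          Finset.sum_congr rfl (fun i _ => by rw [toL_apply])
      _ = n := hP
  have hfilter : (univ.filter (fun c : OrderedFinpartition n => typeVec n c = l)) =
      ofpFiber n (toL n l) := by
    ext c
    simp only [ofpFiber, Finset.mem_filter, Finset.mem_univ, true_and]
    exact typeVec_eq_iff n c l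
  have hcount := ofpFiber_card_mul n (toL n l) (toL_supp n l) hsumL
  rw [← hfilter] at hcount
  -- split Dfac
  have hDsplit : Dfac n (toL n l) =
      ((∏ i, ((l i).1.factorial) : ℕ) : ℝ) * ∏ i : Fin n, (((i.1+1).factorial : ℝ)) ^ (l i).1 := by
    rw [Dfac, prod_Icc_one n
      (fun j => (((toL n l j).factorial : ℝ) * ((j.factorial : ℝ)) ^ (toL n l j)))]
    push_cast
    rw [← Finset.prod_mul_distrib]
    refine Finset.prod_congr rfl fun i _ => ?_
    rw [toL_apply]
  have hfac_pos : ∀ m : ℕ, (0:ℝ) < (m.factorial : ℝ) :=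
    fun m => Nat.cast_pos.mpr m.factorial_pos
  have h1 : ((∏ i, ((l i).1.factorial) : ℕ) : ℝ) ≠ 0 := by
    push_cast
    exact ne_of_gt (Finset.prod_pos (fun i _ => hfac_pos _))
  have h2 : (∏ i : Fin n, (((i.1+1).factorial : ℝ)) ^ (l i).1) ≠ 0 :=
    ne_of_gt (Finset.prod_pos (fun i _ => pow_pos (hfac_pos _) _))
  have hcard : ((univ.filter (fun c : OrderedFinpartition n => typeVec n c = l)).card : ℝ) =
      (n.factorial : ℝ) /
        (((∏ i, ((l i).1.factorial) : ℕ) : ℝ) * ∏ i : Fin n, (((i.1+1).factorial : ℝ)) ^ (l i).1) := by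
    rw [eq_div_iff (mul_ne_zero h1 h2), ← hDsplit]
    exact hcount
  rw [hcard]
  have hprodsplit : (∏ j : Fin n,
      (iteratedDeriv (j.1 + 1) g t / ((j.1 + 1).factorial : ℝ)) ^ (l j).1)
      = (∏ i : Fin n, iteratedDeriv (i.1+1) g t ^ (l i).1) /
        (∏ i : Fin n, (((i.1+1).factorial : ℝ)) ^ (l i).1) := by
    rw [← Finset.prod_div_distrib]
    refine Finset.prod_congr rfl fun i _ => ?_
    rw [div_pow]
  rw [hprodsplit]
  field_simp
end
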